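/- Let C be an abelian category, let v : A ⟶ B be a morphism of cochain complexes over C, and let B' be the mapping cone of the morphism (-id, v) : A ⟶ A ⊞ B, so that in degree n one has (B')^n = A^{n+1} ⊕ A^n ⊕ B^n. Then the degreewise map s : B' ⟶ B given in degree n by (a', a, b) ↦ v(a) + b (i.e., zero on the A^{n+1} summand, v on the A^n summand, and the identity on the B^n summand) is a morphism of cochain complexes and is a quasi-isomorphism. -/

import Mathlib

/-!
The map `(-𝟙 A, v) : A ⟶ A ⊞ B` is the inclusion of the first summand of a second biproduct
decomposition of `A ⊞ B`, whose other summand is `B`, embedded by `biprod.inr` and projected to by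
`(a, b) ↦ v a + b`. The cone of the inclusion of a direct summand is homotopy equivalent to the
complementary summand: the homotopy contracting the `A`-part of the cone is the retraction onto `A`
followed by `inl`.
-/

open CategoryTheory Limits CochainComplex CochainComplex.HomComplex

namespace CategoryTheory.Limits.BinaryBicone

variable {D : Type*} [Category D] [Preadditive D] {X Y : D} [HasBinaryBiproduct X Y]

@[simps]
noncomputable def negGraph (f : X ⟶ Y) : BinaryBicone X Y where
  pt := X ⊞ Y
  fst := -biprod.fst
  snd := biprod.desc f (𝟙 Y)
  inl := biprod.lift (-𝟙 X) f
  inr := biprod.inr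

lemma negGraph_total (f : X ⟶ Y) :
    (negGraph f).fst ≫ (negGraph f).inl + (negGraph f).snd ≫ (negGraph f).inr =
      𝟙 (negGraph f).pt := by
  -- `simp` cannot rewrite `(negGraph f).pt` inside the types of the morphisms, so unfold first.
  have : (-biprod.fst) ≫ biprod.lift (-𝟙 X) f + biprod.desc f (𝟙 Y) ≫ biprod.inr = 𝟙 (X ⊞ Y) := by
    apply biprod.hom_ext' <;> apply biprod.hom_ext <;> simp
  exact this

end CategoryTheory.Limits.BinaryBicone

namespace CochainComplex.mappingCone

variable {C : Type*} [Category C] [Preadditive C] {A B : CochainComplex C ℤ}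
  (c : BinaryBicone A B) [HomologicalComplex.HasHomotopyCofiber c.inl]

noncomputable def biconeSnd : mappingCone c.inl ⟶ B :=
  desc c.inl 0 c.snd (by simp)

@[simp]
lemma inl_comp_ofHom_biconeSnd :
    (inl c.inl).comp (Cochain.ofHom (biconeSnd c)) (add_zero (-1)) = 0 :=
  inl_desc ..

@[simp]
lemma inr_biconeSnd : inr c.inl ≫ biconeSnd c = c.snd :=
  inr_desc ..

variable {c}

noncomputable def homotopyBiconeSndCompInr (hc : c.fst ≫ c.inl + c.snd ≫ c.inr = 𝟙 c.pt) :
    Homotopy (biconeSnd c ≫ c.inr ≫ inr c.inl) (𝟙 _) := by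
  refine descHomotopy c.inl _ _ 0 (-(Cochain.ofHom c.fst).comp (inl c.inl) (zero_add (-1)))
    ?_ ?_
  · rw [Cochain.ofHom_comp, ← Cochain.comp_assoc_of_second_is_zero_cochain,
      inl_comp_ofHom_biconeSnd, Cochain.comp_neg,
      ← Cochain.comp_assoc_of_first_is_zero_cochain, ← Cochain.ofHom_comp, c.inl_fst]
    simp
  · have hsnd : c.snd ≫ c.inr = 𝟙 c.pt - c.fst ≫ c.inl := eq_sub_of_add_eq' hc
    rw [← Category.assoc, inr_biconeSnd, reassoc_of% hsnd, δ_neg, δ_ofHom_comp, δ_inl,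
      ← Cochain.ofHom_comp, ← Cochain.ofHom_neg, ← Cochain.ofHom_add]
    simp [sub_eq_neg_add]

noncomputable def biconeHomotopyEquiv (hc : c.fst ≫ c.inl + c.snd ≫ c.inr = 𝟙 c.pt) :
    HomotopyEquiv (mappingCone c.inl) B where
  hom := biconeSnd c
  inv := c.inr ≫ inr c.inl
  homotopyHomInvId := homotopyBiconeSndCompInr hc
  homotopyInvHomId := Homotopy.ofEq (by simp)

lemma quasiIso_biconeSnd [CategoryWithHomology C]
    (hc : c.fst ≫ c.inl + c.snd ≫ c.inr = 𝟙 c.pt) : QuasiIso (biconeSnd c) :=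
  (biconeHomotopyEquiv hc).quasiIso_hom

end CochainComplex.mappingCone

theorem stmt1 {C : Type*} [Category C] [Abelian C]
    {A B : CochainComplex C ℤ} (v : A ⟶ B) :
    ∃ s : mappingCone (biprod.lift (-𝟙 A) v) ⟶ B,
      (mappingCone.inl (biprod.lift (-𝟙 A) v)).comp (Cochain.ofHom s) (add_zero (-1)) = 0 ∧
      mappingCone.inr (biprod.lift (-𝟙 A) v) ≫ s = biprod.desc v (𝟙 B) ∧
      QuasiIso s :=
  ⟨mappingCone.biconeSnd (BinaryBicone.negGraph v),
    mappingCone.inl_comp_ofHom_biconeSnd (BinaryBicone.negGraph v),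
    mappingCone.inr_biconeSnd (BinaryBicone.negGraph v),
    mappingCone.quasiIso_biconeSnd (BinaryBicone.negGraph_total v)⟩
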